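/- Let λ* > 0 solve ‖r + J p(λ*)‖ = q‖r‖ with q ∈ (0,1), r ≠ 0, and define ψ(λ) = λ/‖r + J p(λ)‖ − λ/(q‖r‖). Then ψ'(λ*) = −(λ*)²/‖r + J p(λ*)‖³ · Σ_{i=1}^{ℓ} sᵢ² ςᵢ² /(ςᵢ² + λ*)³ < 0, where s = Uᵀr and ςᵢ the singular values of J with rank ℓ ≥ 1. -/

import Mathlib

open Matrix Finset

noncomputable def euclNorm {n : ℕ} (v : Fin n → ℝ) : ℝ := Real.sqrt (∑ i, v i ^ 2)

noncomputable def specNorm {n : ℕ} (A : Matrix (Fin n) (Fin n) ℝ) : ℝ :=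
  sSup ((fun v => euclNorm (A.mulVec v)) '' {v | euclNorm v ≤ 1})

noncomputable def pstep {n : ℕ} (J : Matrix (Fin n) (Fin n) ℝ) (r : Fin n → ℝ) (lam : ℝ) :
    Fin n → ℝ :=
  -((Jᵀ * J + lam • (1 : Matrix (Fin n) (Fin n) ℝ))⁻¹.mulVec (Jᵀ.mulVec r))

theorem stmt_12 {n ℓ : ℕ} (hℓ : 1 ≤ ℓ) (J U V : Matrix (Fin n) (Fin n) ℝ) (ς : Fin n → ℝ)
    (hU : U * Uᵀ = 1) (hU' : Uᵀ * U = 1) (hV : V * Vᵀ = 1) (hV' : Vᵀ * V = 1)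
    (hJ : J = U * Matrix.diagonal ς * Vᵀ)
    (hrank : ∀ i : Fin n, ((i : ℕ) < ℓ → 0 < ς i) ∧ (ℓ ≤ (i : ℕ) → ς i = 0))
    (r s : Fin n → ℝ) (hr : r ≠ 0) (hg : Jᵀ.mulVec r ≠ 0) (hs : s = Uᵀ.mulVec r)
    (q : ℝ) (hq : q ∈ Set.Ioo (0 : ℝ) 1)
    (lam : ℝ) (hlam : 0 < lam)
    (hsol : euclNorm (r + J.mulVec (pstep J r lam)) = q * euclNorm r) :
    HasDerivAt
      (fun t => t / euclNorm (r + J.mulVec (pstep J r t)) - t / (q * euclNorm r))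
      (-(lam ^ 2 / euclNorm (r + J.mulVec (pstep J r lam)) ^ 3 *
        ∑ i ∈ Finset.univ.filter (fun i : Fin n => (i : ℕ) < ℓ),
          s i ^ 2 * ς i ^ 2 / (ς i ^ 2 + lam) ^ 3)) lam ∧
    -(lam ^ 2 / euclNorm (r + J.mulVec (pstep J r lam)) ^ 3 *
        ∑ i ∈ Finset.univ.filter (fun i : Fin n => (i : ℕ) < ℓ),
          s i ^ 2 * ς i ^ 2 / (ς i ^ 2 + lam) ^ 3) < 0 := by
  obtain ⟨hq0, hq1⟩ := hq
  -- basic positivity facts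
  have hrpos : 0 < euclNorm r := by
    obtain ⟨i, hi⟩ := Function.ne_iff.mp hr
    have : (0:ℝ) < ∑ j, r j ^ 2 := by
      refine Finset.sum_pos' (fun j _ => sq_nonneg _) ⟨i, Finset.mem_univ i, ?_⟩
      exact lt_of_le_of_ne (sq_nonneg _) (Ne.symm (pow_ne_zero 2 hi))
    exact Real.sqrt_pos.mpr this
  -- diagonal helper lemmas
  have hsmul1 : ∀ (t : ℝ), t • (1 : Matrix (Fin n) (Fin n) ℝ) = Matrix.diagonal (fun _ => t) := by
    intro t; ext i j
    by_cases h : i = j <;> simp [Matrix.one_apply, Matrix.diagonal_apply, h]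
  have hJt : Jᵀ = V * Matrix.diagonal ς * Uᵀ := by
    rw [hJ]; simp [Matrix.transpose_mul, Matrix.mul_assoc]
  have diagVec : ∀ (A : Matrix (Fin n) (Fin n) ℝ) (d x : Fin n → ℝ),
      (A * Matrix.diagonal d).mulVec x = A.mulVec (fun i => d i * x i) := by
    intro A d x
    funext i
    simp [Matrix.mulVec, dotProduct, Matrix.mul_diagonal, mul_assoc]
  -- the key matrix computation
  have key : ∀ t : ℝ, 0 < t →
      r + J.mulVec (pstep J r t) = U.mulVec (fun i => t / (ς i ^ 2 + t) * s i) := by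
    intro t ht
    have hden : ∀ i, ς i ^ 2 + t ≠ 0 := fun i => by positivity
    have hM : Jᵀ * J + t • 1 = V * Matrix.diagonal (fun i => ς i ^ 2 + t) * Vᵀ := by
      have h2 : Jᵀ * J = V * Matrix.diagonal (fun i => ς i ^ 2) * Vᵀ := by
        rw [hJt, hJ]
        have e1 : V * Matrix.diagonal ς * Uᵀ * (U * Matrix.diagonal ς * Vᵀ)
            = V * (Matrix.diagonal ς * (Uᵀ * U) * Matrix.diagonal ς) * Vᵀ := by
          noncomm_ring
        rw [e1, hU', Matrix.mul_one, Matrix.diagonal_mul_diagonal]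
        simp [pow_two]
      have h3 : V * Matrix.diagonal (fun _ => t) * Vᵀ = t • (1 : Matrix (Fin n) (Fin n) ℝ) := by
        rw [← hsmul1, Matrix.mul_smul, Matrix.mul_one, Matrix.smul_mul, hV]
      have h4 : Matrix.diagonal (fun i => ς i ^ 2) + Matrix.diagonal (fun _ => t)
          = Matrix.diagonal (fun i => ς i ^ 2 + t) := by
        ext i j; by_cases h : i = j <;> simp [Matrix.diagonal_apply, h]
      rw [h2, ← h3, ← add_mul, ← mul_add, h4]
    have hMinv : (Jᵀ * J + t • 1)⁻¹ = V * Matrix.diagonal (fun i => (ς i ^ 2 + t)⁻¹) * Vᵀ := by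
      apply Matrix.inv_eq_right_inv
      rw [hM]
      have e1 : V * Matrix.diagonal (fun i => ς i ^ 2 + t) * Vᵀ *
            (V * Matrix.diagonal (fun i => (ς i ^ 2 + t)⁻¹) * Vᵀ)
          = V * (Matrix.diagonal (fun i => ς i ^ 2 + t) * (Vᵀ * V) *
              Matrix.diagonal (fun i => (ς i ^ 2 + t)⁻¹)) * Vᵀ := by
        noncomm_ring
      rw [e1, hV', Matrix.mul_one, Matrix.diagonal_mul_diagonal]
      have e2 : (fun i => (ς i ^ 2 + t) * (ς i ^ 2 + t)⁻¹) = fun _ => (1:ℝ) :=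
        funext fun i => mul_inv_cancel₀ (hden i)
      rw [e2, Matrix.diagonal_one, Matrix.mul_one, hV]
    have hA : J * (Jᵀ * J + t • 1)⁻¹ * Jᵀ
        = U * Matrix.diagonal (fun i => ς i * (ς i ^ 2 + t)⁻¹ * ς i) * Uᵀ := by
      rw [hMinv, hJt, hJ]
      have e1 : U * Matrix.diagonal ς * Vᵀ * (V * Matrix.diagonal (fun i => (ς i ^ 2 + t)⁻¹) * Vᵀ) *
            (V * Matrix.diagonal ς * Uᵀ)
          = U * (Matrix.diagonal ς * (Vᵀ * V) * Matrix.diagonal (fun i => (ς i ^ 2 + t)⁻¹) *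
              (Vᵀ * V) * Matrix.diagonal ς) * Uᵀ := by
        noncomm_ring
      rw [e1, hV', Matrix.mul_one, Matrix.mul_one, Matrix.diagonal_mul_diagonal,
        Matrix.diagonal_mul_diagonal]
    have hone : (1 : Matrix (Fin n) (Fin n) ℝ) - J * (Jᵀ * J + t • 1)⁻¹ * Jᵀ
        = U * Matrix.diagonal (fun i => t / (ς i ^ 2 + t)) * Uᵀ := by
      rw [hA, ← hU]
      have e1 : U * Uᵀ - U * Matrix.diagonal (fun i => ς i * (ς i ^ 2 + t)⁻¹ * ς i) * Uᵀ
          = U * ((1 : Matrix (Fin n) (Fin n) ℝ) -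
              Matrix.diagonal (fun i => ς i * (ς i ^ 2 + t)⁻¹ * ς i)) * Uᵀ := by
        noncomm_ring
      rw [e1]
      congr 2
      ext i j
      by_cases h : i = j
      · subst h
        simp only [Matrix.sub_apply, Matrix.one_apply_eq, Matrix.diagonal_apply_eq]
        field_simp
        ring
      · simp [Matrix.diagonal_apply, Matrix.one_apply, h]
    have hvec : r + J.mulVec (pstep J r t)
        = ((1 : Matrix (Fin n) (Fin n) ℝ) - J * (Jᵀ * J + t • 1)⁻¹ * Jᵀ).mulVec r := by
      unfold pstep
      rw [Matrix.sub_mulVec, Matrix.one_mulVec, Matrix.mulVec_neg, Matrix.mulVec_mulVec,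
        Matrix.mulVec_mulVec]
      abel
    rw [hvec, hone, hs,
      (Matrix.mulVec_mulVec r (U * Matrix.diagonal fun i => t / (ς i ^ 2 + t)) Uᵀ).symm, diagVec]
  -- norm under orthogonal U
  have enormU : ∀ x : Fin n → ℝ, euclNorm (U.mulVec x) = euclNorm x := by
    intro x
    unfold euclNorm
    congr 1
    have h1 : ∀ v : Fin n → ℝ, ∑ i, v i ^ 2 = v ⬝ᵥ v := by
      intro v; simp [dotProduct, sq]
    rw [h1, h1, Matrix.dotProduct_mulVec, ← Matrix.mulVec_transpose, Matrix.mulVec_mulVec,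
      hU', Matrix.one_mulVec]
  -- the scalar function
  set φ : ℝ → ℝ := fun t => ∑ i, (t / (ς i ^ 2 + t) * s i) ^ 2 with hφ
  have hEt : ∀ t : ℝ, 0 < t →
      euclNorm (r + J.mulVec (pstep J r t)) = Real.sqrt (φ t) := by
    intro t ht
    rw [key t ht, enormU]
    rfl
  have hX : Real.sqrt (φ lam) = q * euclNorm r := by rw [← hEt lam hlam, hsol]
  have hXpos : 0 < Real.sqrt (φ lam) := by rw [hX]; positivity
  have hφne : φ lam ≠ 0 := ne_of_gt (Real.sqrt_pos.mp hXpos)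
  -- derivative of φ
  have hderivφ : HasDerivAt φ (∑ i, 2 * lam * ς i ^ 2 * s i ^ 2 / (ς i ^ 2 + lam) ^ 3) lam := by
    apply HasDerivAt.fun_sum
    intro i _
    have hne : ς i ^ 2 + lam ≠ 0 := by positivity
    have h1 : HasDerivAt (fun t : ℝ => t / (ς i ^ 2 + t)) (ς i ^ 2 / (ς i ^ 2 + lam) ^ 2) lam := by
      have h0 := (hasDerivAt_id lam).fun_div ((hasDerivAt_id lam).const_add (ς i ^ 2)) hne
      convert h0 using 1
      · rfl
      · rfl
      · rfl
      simp only [id]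
      field_simp
      ring
    have h2 := (h1.mul_const (s i)).fun_pow 2
    convert h2 using 1
    · rfl
    simp only [Nat.cast_ofNat, show (2:ℕ) - 1 = 1 from rfl, pow_one]
    field_simp
  have hsq : HasDerivAt (fun t => Real.sqrt (φ t))
      ((∑ i, 2 * lam * ς i ^ 2 * s i ^ 2 / (ς i ^ 2 + lam) ^ 3) / (2 * Real.sqrt (φ lam))) lam :=
    hderivφ.sqrt hφne
  have h5 : HasDerivAt (fun t => t / Real.sqrt (φ t))
      ((1 * Real.sqrt (φ lam) - lam *
        ((∑ i, 2 * lam * ς i ^ 2 * s i ^ 2 / (ς i ^ 2 + lam) ^ 3) / (2 * Real.sqrt (φ lam)))) /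
        Real.sqrt (φ lam) ^ 2) lam :=
    (hasDerivAt_id' lam).div hsq (ne_of_gt hXpos)
  have h6 : HasDerivAt (fun t => t / Real.sqrt (φ t) - t / (q * euclNorm r))
      ((1 * Real.sqrt (φ lam) - lam *
        ((∑ i, 2 * lam * ς i ^ 2 * s i ^ 2 / (ς i ^ 2 + lam) ^ 3) / (2 * Real.sqrt (φ lam)))) /
        Real.sqrt (φ lam) ^ 2 - 1 / (q * euclNorm r)) lam :=
    h5.sub ((hasDerivAt_id' lam).div_const (q * euclNorm r))
  have hev : (fun t => t / euclNorm (r + J.mulVec (pstep J r t)) - t / (q * euclNorm r))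
      =ᶠ[nhds lam] (fun t => t / Real.sqrt (φ t) - t / (q * euclNorm r)) := by
    filter_upwards [Ioi_mem_nhds hlam] with t ht
    rw [hEt t ht]
  have h7 := h6.congr_of_eventuallyEq hev
  -- sum over filter equals full sum
  have hsum : ∑ i ∈ Finset.univ.filter (fun i : Fin n => (i : ℕ) < ℓ),
      s i ^ 2 * ς i ^ 2 / (ς i ^ 2 + lam) ^ 3
      = ∑ i, s i ^ 2 * ς i ^ 2 / (ς i ^ 2 + lam) ^ 3 := by
    apply Finset.sum_filter_of_ne
    intro i _ hne
    by_contra hcon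
    push_neg at hcon
    rw [(hrank i).2 hcon] at hne
    simp at hne
  -- witness for positivity of the sum
  have hwit : ∃ i : Fin n, (i : ℕ) < ℓ ∧ s i ≠ 0 := by
    by_contra hcon
    push_neg at hcon
    apply hg
    have : ∀ i, ς i * s i = 0 := by
      intro i
      by_cases h : (i : ℕ) < ℓ
      · rw [hcon i h, mul_zero]
      · rw [(hrank i).2 (le_of_not_gt h), zero_mul]
    have hzero : Jᵀ.mulVec r = V.mulVec (fun i => ς i * s i) := by
      rw [hJt, (Matrix.mulVec_mulVec r (V * Matrix.diagonal ς) Uᵀ).symm, ← hs, diagVec]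
    rw [hzero]
    have : (fun i => ς i * s i) = (0 : Fin n → ℝ) := funext this
    rw [this, Matrix.mulVec_zero]
  have hSpos : 0 < ∑ i ∈ Finset.univ.filter (fun i : Fin n => (i : ℕ) < ℓ),
      s i ^ 2 * ς i ^ 2 / (ς i ^ 2 + lam) ^ 3 := by
    obtain ⟨i, hiℓ, hsi⟩ := hwit
    refine Finset.sum_pos' (fun j _ => by positivity) ⟨i, ?_, ?_⟩
    · simp [hiℓ]
    · have hςi : 0 < ς i := (hrank i).1 hiℓ
      have hs2 : 0 < s i ^ 2 := lt_of_le_of_ne (sq_nonneg _) (Ne.symm (pow_ne_zero 2 hsi))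
      positivity
  have hEpos : 0 < euclNorm (r + J.mulVec (pstep J r lam)) := by rw [hsol]; positivity
  constructor
  · convert h7 using 1
    · rfl
    · rfl
    rw [hsum, hEt lam hlam, ← hX]
    have hΦ : (∑ i, 2 * lam * ς i ^ 2 * s i ^ 2 / (ς i ^ 2 + lam) ^ 3)
        = 2 * lam * ∑ i, s i ^ 2 * ς i ^ 2 / (ς i ^ 2 + lam) ^ 3 := by
      rw [Finset.mul_sum]
      exact Finset.sum_congr rfl fun i _ => by ring
    rw [hΦ]
    generalize hXd : Real.sqrt (φ lam) = X
    rw [hXd] at hXpos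
    have hXne : X ≠ 0 := ne_of_gt hXpos
    field_simp
    ring
  · have : 0 < lam ^ 2 / euclNorm (r + J.mulVec (pstep J r lam)) ^ 3 *
        ∑ i ∈ Finset.univ.filter (fun i : Fin n => (i : ℕ) < ℓ),
          s i ^ 2 * ς i ^ 2 / (ς i ^ 2 + lam) ^ 3 := by
      apply mul_pos _ hSpos
      positivity
    linarith
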